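/- arXiv:1210.7837 — 2 statements merged into one kernel-verified Lean document; each statement's English description precedes it below -/
import Mathlib

section
/- Let Q : ℕ → ℝ satisfy Q(t) ≥ 0, Q(t+1) = max(Q(t) - μ(t), 0), with 0 ≤ μ(t) ≤ μmax for all t, over a frame of T slots starting at time kT after an initial arrival: Q(kT+1) = max(Q(kT) - μ(kT), 0) + A with A ≥ 0. Then Q(kT+T)^2 - Q(kT)^2 ≤ A^2 + T^2·μmax^2 + 2·Q(kT)·(A - Σ_{t=0}^{T-1} μ(kT+t)). -/
/-!
Unrolling the recursion, after `t` slots of the frame the backlog is at most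
`max (Q(kT) - S_t) 0 + A`, where `S_t` is the service offered in those slots: service removes
backlog at most one-for-one, so the arrival `A` survives at worst untouched. Square this at
`t = T`; the cross term is controlled by `max (Q(kT) - S) 0 ≤ Q(kT)`, and `S ≤ T μmax`.
-/

open Finset

lemma max_add_sub_max_le {a A m : ℝ} (hA : 0 ≤ A) (hm : 0 ≤ m) :
    max (max a 0 + A - m) 0 ≤ max (a - m) 0 + A := by
  rcases le_total a 0 with ha | ha
  · rw [max_eq_right ha, max_le_iff]
    constructor <;> linarith [le_max_right (a - m) 0]
  · rw [max_eq_left ha, max_le_iff]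
    constructor <;> linarith [le_max_left (a - m) 0, le_max_right (a - m) 0]

lemma le_max_sub_sum_add_of_frame {q m : ℕ → ℝ} {A : ℝ} {n : ℕ}
    (hm : ∀ t, 0 ≤ m t) (hA : 0 ≤ A)
    (harr : q 1 = max (q 0 - m 0) 0 + A)
    (hrec : ∀ t, 1 ≤ t → t < n → q (t + 1) = max (q t - m t) 0) :
    ∀ t ≤ n, q t ≤ max (q 0 - ∑ s ∈ range t, m s) 0 + A := by
  intro t
  induction t with
  | zero =>
    intro _
    simpa using le_add_of_le_of_nonneg (le_max_left (q 0) 0) hA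
  | succ t ih =>
    intro ht
    rcases Nat.eq_zero_or_pos t with rfl | htpos
    · simp [harr]
    · rw [hrec t htpos ht, sum_range_succ, ← sub_sub]
      calc max (q t - m t) 0
          ≤ max (max (q 0 - ∑ s ∈ range t, m s) 0 + A - m t) 0 := by
            gcongr
            exact ih (Nat.le_of_succ_le ht)
        _ ≤ max (q 0 - ∑ s ∈ range t, m s - m t) 0 + A := max_add_sub_max_le hA (hm t)

lemma sq_sub_sq_le_of_le_max_sub_add {q₀ q S A : ℝ} (hq₀ : 0 ≤ q₀) (hq : 0 ≤ q)
    (hS : 0 ≤ S) (hA : 0 ≤ A) (h : q ≤ max (q₀ - S) 0 + A) :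
    q ^ 2 - q₀ ^ 2 ≤ A ^ 2 + S ^ 2 + 2 * q₀ * (A - S) := by
  set x := max (q₀ - S) 0
  have hx₀ : 0 ≤ x := le_max_right _ _
  have hxq₀ : x ≤ q₀ := max_le (by linarith) hq₀
  have hx_sq : x ^ 2 ≤ (q₀ - S) ^ 2 := by
    simpa only [sq_abs] using pow_le_pow_left₀ hx₀ (max_le (le_abs_self _) (abs_nonneg _)) 2
  have hq_sq : q ^ 2 ≤ (x + A) ^ 2 := pow_le_pow_left₀ hq h 2
  nlinarith [mul_le_mul_of_nonneg_right hxq₀ hA]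

theorem stmt3_general (Q μ : ℕ → ℝ) (μmax A : ℝ) (k T : ℕ)
    (hQnn : ∀ t, 0 ≤ Q t)
    (hμ : ∀ t, 0 ≤ μ t ∧ μ t ≤ μmax)
    (hA : 0 ≤ A)
    (harr : Q (k * T + 1) = max (Q (k * T) - μ (k * T)) 0 + A)
    (hrec : ∀ t, 1 ≤ t → t ≤ T - 1 →
      Q (k * T + t + 1) = max (Q (k * T + t) - μ (k * T + t)) 0) :
    Q (k * T + T) ^ 2 - Q (k * T) ^ 2 ≤
      A ^ 2 + (T : ℝ) ^ 2 * μmax ^ 2 +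
        2 * Q (k * T) * (A - ∑ t ∈ Finset.range T, μ (k * T + t)) := by
  set S := ∑ t ∈ range T, μ (k * T + t)
  have hframe : Q (k * T + T) ≤ max (Q (k * T) - S) 0 + A :=
    le_max_sub_sum_add_of_frame (q := fun t ↦ Q (k * T + t)) (m := fun t ↦ μ (k * T + t))
      (fun t ↦ (hμ _).1) hA harr (fun t h₁ h₂ ↦ hrec t h₁ (by omega)) T le_rfl
  have hS₀ : 0 ≤ S := sum_nonneg fun t _ ↦ (hμ _).1
  have hS_sq : S ^ 2 ≤ (T : ℝ) ^ 2 * μmax ^ 2 := by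
    have hS : S ≤ T * μmax := by
      simpa using sum_le_card_nsmul (range T) _ μmax fun t _ ↦ (hμ (k * T + t)).2
    nlinarith [pow_le_pow_left₀ hS₀ hS 2]
  linarith [sq_sub_sq_le_of_le_max_sub_add (hQnn _) (hQnn _) hS₀ hA hframe]

theorem stmt3 (Q μ : ℕ → ℝ) (μmax A : ℝ) (k T : ℕ) (hT : 1 ≤ T)
    (hQnn : ∀ t, 0 ≤ Q t)
    (hμ : ∀ t, 0 ≤ μ t ∧ μ t ≤ μmax)
    (hA : 0 ≤ A)
    (harr : Q (k * T + 1) = max (Q (k * T) - μ (k * T)) 0 + A)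
    (hrec : ∀ t, 1 ≤ t → t ≤ T - 1 →
      Q (k * T + t + 1) = max (Q (k * T + t) - μ (k * T + t)) 0) :
    Q (k * T + T) ^ 2 - Q (k * T) ^ 2 ≤
      A ^ 2 + (T : ℝ) ^ 2 * μmax ^ 2 +
        2 * Q (k * T) * (A - ∑ t ∈ Finset.range T, μ (k * T + t)) :=
  stmt3_general Q μ μmax A k T hQnn hμ hA harr hrec
end

section
/- Let N, M ∈ ℕ, x_max ≥ 0, Q : Fin N → ℝ≥0, and weights w(i,j) ∈ [0, x_max] for i ∈ Fin N, j ∈ Fin M. Suppose I : Fin M → Fin N satisfies, for virtual queues Q^{(j)} with Qᵢ − M·x_max ≤ Q^{(j)}ᵢ ≤ Qᵢ, the per-round optimality Q^{(j)}(I(j))·w(I(j),j) ≥ Q^{(j)}(i)·w(i,j) for all i. Then for any I' : Fin M → Fin N, Σⱼ Q(I(j))·w(I(j),j) ≥ Σⱼ Q(I'(j))·w(I'(j),j) − M²·x_max². -/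
/-! Each virtual queue lies within `M * xmax` below the true queue, so in every round the greedy
choice, optimal for the virtual queues, loses at most `M * xmax * xmax` against any other choice
for the true queues; summing over the `M` rounds gives `M ^ 2 * xmax ^ 2`. -/

theorem mul_le_mul_add_of_perturbed_le {q q' v v' a a' δ c : ℝ}
    (hv' : q' - δ ≤ v') (hv : v ≤ q) (ha : 0 ≤ a) (ha' : 0 ≤ a') (ha'c : a' ≤ c) (hδ : 0 ≤ δ)
    (hopt : v' * a' ≤ v * a) : q' * a' ≤ q * a + δ * c :=
  calc q' * a' = v' * a' + (q' - v') * a' := by ring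
    _ ≤ v * a + δ * c := add_le_add hopt (mul_le_mul (by linarith) ha'c ha' hδ)
    _ ≤ q * a + δ * c := by gcongr

theorem stmt10_general (N M : ℕ) (xmax : ℝ)
    (Q : Fin N → ℝ)
    (w : Fin N → Fin M → ℝ) (hw : ∀ i j, 0 ≤ w i j ∧ w i j ≤ xmax)
    (Qv : Fin M → Fin N → ℝ)
    (hQv : ∀ j i, Q i - M * xmax ≤ Qv j i ∧ Qv j i ≤ Q i)
    (I : Fin M → Fin N)
    (hI : ∀ j i, Qv j i * w i j ≤ Qv j (I j) * w (I j) j)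
    (I' : Fin M → Fin N) :
    ∑ j, Q (I' j) * w (I' j) j - (M : ℝ) ^ 2 * xmax ^ 2 ≤
      ∑ j, Q (I j) * w (I j) j := by
  have hround (j : Fin M) : Q (I' j) * w (I' j) j ≤ Q (I j) * w (I j) j + M * xmax * xmax := by
    have hxmax : 0 ≤ xmax := (hw (I j) j).1.trans (hw (I j) j).2
    exact mul_le_mul_add_of_perturbed_le (hQv j (I' j)).1 (hQv j (I j)).2 (hw (I j) j).1
      (hw (I' j) j).1 (hw (I' j) j).2 (by positivity) (hI j (I' j))
  calc ∑ j, Q (I' j) * w (I' j) j - (M : ℝ) ^ 2 * xmax ^ 2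
      ≤ ∑ j, (Q (I j) * w (I j) j + M * xmax * xmax) - (M : ℝ) ^ 2 * xmax ^ 2 := by
        gcongr with j; exact hround j
    _ = ∑ j, Q (I j) * w (I j) j := by
        simp only [Finset.sum_add_distrib, Finset.sum_const, Finset.card_univ, Fintype.card_fin,
          nsmul_eq_mul]
        ring

theorem stmt10 (N M : ℕ) (xmax : ℝ) (hx : 0 ≤ xmax)
    (Q : Fin N → ℝ) (hQ : ∀ i, 0 ≤ Q i)
    (w : Fin N → Fin M → ℝ) (hw : ∀ i j, 0 ≤ w i j ∧ w i j ≤ xmax)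
    (Qv : Fin M → Fin N → ℝ)
    (hQv : ∀ j i, Q i - M * xmax ≤ Qv j i ∧ Qv j i ≤ Q i)
    (I : Fin M → Fin N)
    (hI : ∀ j i, Qv j i * w i j ≤ Qv j (I j) * w (I j) j)
    (I' : Fin M → Fin N) :
    ∑ j, Q (I' j) * w (I' j) j - (M : ℝ) ^ 2 * xmax ^ 2 ≤
      ∑ j, Q (I j) * w (I j) j :=
  stmt10_general N M xmax Q w hw Qv hQv I hI I'
end
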